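/- Let G be a finite group, H ⊴ G with abelian quotient K, and χ an irreducible character of G. Define 𝓕Ω_χ(ξ₁,ξ₂) = (χ(1)/|G|²) · Σ_{x,y ∈ G} ξ₁(x) ξ₂(y) χ([x,y]) for ξ₁, ξ₂ ∈ Irr(K) (viewed as characters of G via the quotient). Then 𝓕Ω_χ(ξ₁,ξ₂) = 0 unless both ξ₁ and ξ₂ stabilize χ (i.e., ξᵢχ = χ). -/

import Mathlib

/-!
For a linear character `ξ` of `G`, the twisted average `P_ξ(A) = ∑_y ξ(y) ρ(y) A ρ(y)⁻¹`
intertwines `ρ` with its twist `g ↦ ξ(g) ρ(g)`. By Schur's lemma, for irreducible `ρ` a nonzero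
intertwiner is an isomorphism, so `ξ χ = χ`. The inner sums of `𝓕Ω_χ(ξ₁, ξ₂)` are traces
`tr (P_ξ(ρ a) ρ b)`: `∑_x ξ₁(x) χ([x, y])` with `a = y`, `b = y⁻¹`, and, after cycling the
commutator, `∑_y ξ₂(y) χ([x, y])` with `ξ = ξ₂`, `a = x⁻¹`, `b = x`. If `𝓕Ω_χ(ξ₁, ξ₂) ≠ 0`, for
each `i` one of these is nonzero, hence so is `P_{ξᵢ}(ρ a)`.
-/

open scoped Classical

noncomputable section

def IsIrredChar (G : Type) [Group G] (χ : G → ℂ) : Prop :=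
  ∃ V : FDRep ℂ G, CategoryTheory.Simple V ∧ ∀ g : G, χ g = V.character g

/-- `𝓕Ω_χ(ξ₁,ξ₂) = (χ(1)/|G|²) Σ_{x,y} ξ₁(x) ξ₂(y) χ([x,y])`. -/
def FOmega {G : Type} [Group G] [Fintype G] (χ : G → ℂ) (ξ₁ ξ₂ : G →* ℂ) : ℂ :=
  (χ 1 / (Fintype.card G : ℂ) ^ 2) *
    ∑ x : G, ∑ y : G, ξ₁ x * ξ₂ y * χ (x * y * x⁻¹ * y⁻¹)

namespace Representation

section CommSemiring

variable {k G V : Type*} [CommSemiring k] [AddCommMonoid V] [Module k V]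

def twist [Monoid G] (ρ : Representation k G V) (ξ : G →* k) : Representation k G V where
  toFun g := ξ g • ρ g
  map_one' := by simp
  map_mul' g h := by rw [map_mul, map_mul, smul_mul_smul_comm]

@[simp]
lemma twist_apply [Monoid G] (ρ : Representation k G V) (ξ : G →* k) (g : G) :
    ρ.twist ξ g = ξ g • ρ g := rfl

def twistedAverage [Group G] [Fintype G] (ρ : Representation k G V) (ξ : G →* k)
    (A : V →ₗ[k] V) : IntertwiningMap ρ (ρ.twist ξ) where
  toLinearMap := ∑ y, ξ y • (ρ y * A * ρ y⁻¹)
  isIntertwining' g := by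
    rw [← Module.End.mul_eq_comp, ← Module.End.mul_eq_comp, twist_apply, Finset.sum_mul,
      Finset.mul_sum, ← Equiv.sum_comp (Equiv.mulLeft g)]
    refine Finset.sum_congr rfl fun y _ => ?_
    have hρ : ρ g⁻¹ * ρ g = 1 := by rw [← map_mul, inv_mul_cancel, map_one]
    simp only [Equiv.coe_mulLeft, map_mul, mul_inv_rev, smul_mul_assoc, mul_smul_comm, smul_smul,
      mul_assoc, hρ, mul_one, mul_comm (ξ y)]

end CommSemiring

variable {k G V : Type*} [Field k] [AddCommGroup V] [Module k V]

section Monoid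

variable [Monoid G] (ρ : Representation k G V) (ξ : G →* k)

lemma character_twist (g : G) : (ρ.twist ξ).character g = ξ g * ρ.character g := by
  simp [character]

variable {ρ ξ} in
lemma IsIrreducible.character_twist_eq [FiniteDimensional k V] [ρ.IsIrreducible]
    (f : IntertwiningMap ρ (ρ.twist ξ)) (hf : f ≠ 0) : (ρ.twist ξ).character = ρ.character := by
  have hinj := (IsIrreducible.injective_or_eq_zero f).resolve_right hf
  exact (char_iso (f.ofBijective ⟨hinj, LinearMap.injective_iff_surjective.mp hinj⟩)).symm

end Monoid

variable [Group G] [Fintype G] (ρ : Representation k G V) (ξ : G →* k)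

lemma trace_twistedAverage_comp (a b : G) :
    LinearMap.trace k V ((ρ.twistedAverage ξ (ρ a)).toLinearMap ∘ₗ ρ b) =
      ∑ x, ξ x * ρ.character (x * a * x⁻¹ * b) := by
  simp [twistedAverage, ← Module.End.mul_eq_comp, Finset.sum_mul, character]

variable {ρ ξ} in
lemma IsIrreducible.character_twist_eq_of_sum_ne_zero [FiniteDimensional k V] [ρ.IsIrreducible]
    {a b : G} (h : ∑ x, ξ x * ρ.character (x * a * x⁻¹ * b) ≠ 0) :
    (ρ.twist ξ).character = ρ.character := by
  refine IsIrreducible.character_twist_eq (ρ.twistedAverage ξ (ρ a)) fun h0 => h ?_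
  rw [← trace_twistedAverage_comp, h0, IntertwiningMap.zero_toLinearMap, LinearMap.zero_comp,
    map_zero]

end Representation

namespace FDRep

open CategoryTheory

variable {k G : Type*} [Field k] [Monoid G]

def subrepresentationSubtype (V : FDRep k G) (W : Subrepresentation V.ρ) :
    FDRep.of W.toRepresentation ⟶ V :=
  ⟨FGModuleCat.ofHom W.toSubmodule.subtype, fun _ => rfl⟩

instance isIrreducible_ρ (V : FDRep k G) [Simple V] : Representation.IsIrreducible V.ρ where
  exists_pair_ne := by
    refine ⟨⊥, ⊤, fun h => id_nonzero V (ConcreteCategory.hom_ext _ _ fun v => ?_)⟩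
    -- `v ∈ ⊥` unfolds to `v = 0`, which is the goal `(𝟙 V) v = (0 : V ⟶ V) v`
    exact (h ▸ trivial : v ∈ (⊥ : Subrepresentation V.ρ))
  eq_bot_or_eq_top W := by
    refine or_iff_not_imp_left.mpr fun hW => Subrepresentation.toSubmodule_injective ?_
    have : Mono (V.subrepresentationSubtype W) :=
      ConcreteCategory.mono_of_injective _ Subtype.val_injective
    have : IsIso (V.subrepresentationSubtype W) := isIso_of_mono_of_nonzero fun h0 =>
      hW <| Subrepresentation.toSubmodule_injective <|
        (Submodule.eq_bot_iff W.toSubmodule).mpr fun w hw =>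
          by exact ConcreteCategory.congr_hom h0 (⟨w, hw⟩ : W.toSubmodule)
    refine Submodule.eq_top_iff'.mpr fun v => ?_
    obtain ⟨w, rfl⟩ := (ConcreteCategory.bijective_of_isIso (V.subrepresentationSubtype W)).2 v
    exact w.2

end FDRep

theorem FOmega_eq_zero_of_not_stab_general {G : Type} [Group G] [Fintype G]
    (χ : G → ℂ) (hχ : IsIrredChar G χ)
    (ξ₁ ξ₂ : G →* ℂ)
    (hne : FOmega χ ξ₁ ξ₂ ≠ 0) :
    (∀ g : G, ξ₁ g * χ g = χ g) ∧ (∀ g : G, ξ₂ g * χ g = χ g) := by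
  obtain ⟨V, hV, hχV⟩ := hχ
  obtain rfl : χ = V.character := funext hχV
  have stab {ξ : G →* ℂ} {a b : G} (h : ∑ x, ξ x * V.character (x * a * x⁻¹ * b) ≠ 0)
      (g : G) : ξ g * V.character g = V.character g := by
    have := congrFun (Representation.IsIrreducible.character_twist_eq_of_sum_ne_zero
      (ρ := V.ρ) h) g
    rwa [Representation.character_twist] at this
  have hsum := right_ne_zero_of_mul hne
  constructor
  · rw [Finset.sum_comm] at hsum
    obtain ⟨y, -, hy⟩ := Finset.exists_ne_zero_of_sum_ne_zero hsum
    simp_rw [mul_right_comm _ (ξ₂ y), ← Finset.sum_mul] at hy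
    exact stab (left_ne_zero_of_mul hy)
  · obtain ⟨x, -, hx⟩ := Finset.exists_ne_zero_of_sum_ne_zero hsum
    have hcycle (y : G) : V.character (x * y * x⁻¹ * y⁻¹) = V.character (y * x⁻¹ * y⁻¹ * x) := by
      simpa only [mul_assoc] using V.char_mul_comm (y * x⁻¹ * y⁻¹) x
    simp_rw [mul_assoc (ξ₁ x), ← Finset.mul_sum, hcycle] at hx
    exact stab (right_ne_zero_of_mul hx)

/-- For `H ⊴ G` with abelian quotient, `χ` irreducible, and `ξ₁, ξ₂` characters of
`K = G/H` (trivial on `H`): if `𝓕Ω_χ(ξ₁,ξ₂) ≠ 0` then both `ξ₁` and `ξ₂` stabilize `χ`. -/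
theorem FOmega_eq_zero_of_not_stab {G : Type} [Group G] [Fintype G]
    (H : Subgroup G) [H.Normal]
    (hab : ∀ a b : G, a * b * a⁻¹ * b⁻¹ ∈ H)
    (χ : G → ℂ) (hχ : IsIrredChar G χ)
    (ξ₁ ξ₂ : G →* ℂ) (h₁ : ∀ h ∈ H, ξ₁ h = 1) (h₂ : ∀ h ∈ H, ξ₂ h = 1)
    (hne : FOmega χ ξ₁ ξ₂ ≠ 0) :
    (∀ g : G, ξ₁ g * χ g = χ g) ∧ (∀ g : G, ξ₂ g * χ g = χ g) :=
  FOmega_eq_zero_of_not_stab_general χ hχ ξ₁ ξ₂ hne
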